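/- arXiv:2010.11331 — 4 statements merged into one kernel-verified Lean document; each statement's English description precedes it below -/
import Mathlib

section
/- Let f ∈ L¹(𝕋²), v ∈ ℤ² \ {0} and k ∈ ℤ². Then I_v f ∈ L¹(𝕋²) and its Fourier coefficient at k satisfies: \widehat{I_v f}(k) = f̂(k) if k·v = 0, and \widehat{I_v f}(k) = 0 if k·v ≠ 0. -/
noncomputable section
open MeasureTheory Real
open scoped ENNReal NNReal

instance : Fact ((0:ℝ) < 1) := ⟨one_pos⟩

/-- The flat torus `𝕋ⁿ = ℝⁿ/ℤⁿ`, with the probability Haar (Lebesgue) measure. -/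
abbrev Torus (n : ℕ) := Fin n → AddCircle (1:ℝ)

/-- The quotient map `π : ℝⁿ → 𝕋ⁿ`. -/
def tmap {n : ℕ} (x : Fin n → ℝ) : Torus n := fun i => (x i : AddCircle (1:ℝ))

/-- The character `x ↦ e^{2πi k·x}` on the torus. -/
def char {n : ℕ} (k : Fin n → ℤ) (x : Torus n) : ℂ := ∏ i, fourier (k i) (x i)

/-- The Fourier coefficient `f̂(k) = ∫ f(x) e^{−2πi k·x} dx`. -/
def fCoeff {n : ℕ} (f : Torus n → ℂ) (k : Fin n → ℤ) : ℂ := ∫ x, char (-k) x * f x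

/-- The X-ray transform on `𝕋²` in direction `v ∈ ℤ² \ {0}`:
`I_v f(x) = ∫₀¹ f(x + t v) dt`. -/
def xray (v : Fin 2 → ℤ) (f : Torus 2 → ℂ) (x : Torus 2) : ℂ :=
  ∫ t in (0:ℝ)..1, f (x + tmap fun i => t * (v i : ℝ))

/-! Translation by the point `t v` preserves Haar measure, so by Fubini `I_v f` is integrable
and `(I_v f)^(k) = (∫₀¹ e^{2πi (k·v) t} dt) f̂(k)`, because translating by `y` multiplies the
`k`-th Fourier coefficient by `e^{2πi k·y}`. The remaining integral is `1` if `k·v = 0` and `0`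
otherwise. -/

section TranslateAlongCurve

variable {α G : Type*} [MeasurableSpace α] [MeasurableSpace G] [AddGroup G] [MeasurableAdd₂ G]
  {μ : Measure G} [SFinite μ] [μ.IsAddRightInvariant] {ν : Measure α} [IsFiniteMeasure ν]
  {τ : α → G}

theorem measurePreserving_prod_add_right_comp (hτ : Measurable τ) :
    MeasurePreserving (fun p : α × G => (p.1, p.2 + τ p.1)) (ν.prod μ) (ν.prod μ) :=
  (MeasurePreserving.id ν).skew_product (g := fun a x => x + τ a)
    (measurable_snd.add (hτ.comp measurable_fst))
    (ae_of_all _ fun a => map_add_right_eq_self μ (τ a))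

theorem MeasureTheory.Integrable.comp_add_prod {E : Type*} [NormedAddCommGroup E] {f : G → E}
    (hτ : Measurable τ) (hf : Integrable f μ) :
    Integrable (fun p : α × G => f (p.2 + τ p.1)) (ν.prod μ) := by
  have hsnd : Integrable (fun p : α × G => f p.2) (ν.prod μ) := hf.comp_snd ν
  exact (measurePreserving_prod_add_right_comp hτ).integrable_comp_of_integrable hsnd

theorem MeasureTheory.Integrable.integral_comp_add {E : Type*} [NormedAddCommGroup E]
    [NormedSpace ℝ E] {f : G → E} (hτ : Measurable τ) (hf : Integrable f μ) :
    Integrable (fun x => ∫ a, f (x + τ a) ∂ν) μ :=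
  (hf.comp_add_prod hτ).integral_prod_right

theorem integral_mul_integral_comp_add_swap {f g : G → ℂ} {C : ℝ} (hτ : Measurable τ)
    (hf : Integrable f μ) (hg : AEStronglyMeasurable g μ) (hgC : ∀ x, ‖g x‖ ≤ C) :
    ∫ x, g x * ∫ a, f (x + τ a) ∂ν ∂μ = ∫ a, ∫ x, g x * f (x + τ a) ∂μ ∂ν := by
  have hprod : Integrable (fun p : G × α => g p.1 * f (p.1 + τ p.2)) (μ.prod ν) :=
    (hf.comp_add_prod hτ).swap.bdd_mul hg.comp_fst (ae_of_all _ fun p => hgC p.1)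
  simp_rw [← integral_const_mul]
  exact integral_integral_swap hprod

end TranslateAlongCurve

theorem fourier_apply_add {T : ℝ} (n : ℤ) (x y : AddCircle T) :
    fourier n (x + y) = fourier n x * fourier n y := by
  simp_rw [fourier_apply, smul_add, AddCircle.toCircle_add, Circle.coe_mul]

theorem fourier_neg_apply_neg {T : ℝ} (n : ℤ) (x : AddCircle T) :
    fourier (-n) (-x) = fourier n x := by
  simp_rw [fourier_apply, neg_smul_neg]

section Torus

variable {n : ℕ}

theorem continuous_tmap : Continuous (tmap : (Fin n → ℝ) → Torus n) :=
  continuous_pi fun i => (AddCircle.continuous_mk' 1).comp (continuous_apply i)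

theorem continuous_tmap_mul (v : Fin n → ℤ) :
    Continuous fun t : ℝ => tmap fun i => t * (v i : ℝ) :=
  continuous_tmap.comp (continuous_pi fun _ => continuous_id.mul continuous_const)

theorem char_add (k : Fin n → ℤ) (x y : Torus n) : char k (x + y) = char k x * char k y := by
  simp_rw [char, Pi.add_apply, fourier_apply_add, Finset.prod_mul_distrib]

theorem char_neg_neg (k : Fin n → ℤ) (x : Torus n) : char (-k) (-x) = char k x := by
  simp_rw [char, Pi.neg_apply, fourier_neg_apply_neg]

theorem continuous_char (k : Fin n → ℤ) : Continuous (char k) :=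
  continuous_finsetProd _ fun i _ => (fourier (k i)).continuous.comp (continuous_apply i)

theorem norm_char (k : Fin n → ℤ) (x : Torus n) : ‖char k x‖ = 1 := by
  simp_rw [char, norm_prod, fourier_apply, Circle.norm_coe, Finset.prod_const_one]

theorem char_tmap (k : Fin n → ℤ) (x : Fin n → ℝ) :
    char k (tmap x) = Complex.exp (2 * π * Complex.I * ∑ i, (k i : ℂ) * x i) := by
  simp_rw [char, tmap, fourier_coe_apply, ← Complex.exp_sum, Finset.mul_sum]
  congr 1
  push_cast
  exact Finset.sum_congr rfl fun i _ => by ring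

theorem char_tmap_mul (k v : Fin n → ℤ) (t : ℝ) :
    char k (tmap fun i => t * (v i : ℝ)) =
      Complex.exp (2 * π * Complex.I * (∑ i, k i * v i : ℤ) * t) := by
  rw [char_tmap, mul_assoc _ _ (t : ℂ)]
  push_cast
  rw [Finset.sum_mul]
  exact congrArg _ (congrArg _ (Finset.sum_congr rfl fun i _ => by ring))

theorem fCoeff_comp_add_right (f : Torus n → ℂ) (y : Torus n) (k : Fin n → ℤ) :
    fCoeff (fun x => f (x + y)) k = char k y * fCoeff f k := by
  rw [fCoeff, ← integral_add_right_eq_self _ (-y), fCoeff, ← integral_const_mul]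
  simp_rw [neg_add_cancel_right, char_add, char_neg_neg, mul_comm _ (char k y), mul_assoc]

end Torus

theorem integral_exp_two_pi_I_int_mul (m : ℤ) :
    ∫ t in (0:ℝ)..1, Complex.exp (2 * π * Complex.I * m * t) = if m = 0 then 1 else 0 := by
  split_ifs with hm
  · simp [hm]
  · have hc : 2 * π * Complex.I * m ≠ 0 := by simp [hm, Real.pi_ne_zero]
    rw [integral_exp_mul_complex hc, Complex.ofReal_one, mul_one, mul_comm _ (m : ℂ),
      Complex.exp_int_mul_two_pi_mul_I]
    simp

section XRay

variable (v : Fin 2 → ℤ)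

theorem xray_eq_setIntegral (f : Torus 2 → ℂ) (x : Torus 2) :
    xray v f x = ∫ t in Set.Ioc 0 1, f (x + tmap fun i => t * (v i : ℝ)) :=
  intervalIntegral.integral_of_le zero_le_one

theorem integrable_xray {f : Torus 2 → ℂ} (hf : Integrable f) : Integrable (xray v f) := by
  rw [show xray v f = _ from funext (xray_eq_setIntegral v f)]
  exact hf.integral_comp_add (continuous_tmap_mul v).measurable

theorem fCoeff_xray {f : Torus 2 → ℂ} (hf : Integrable f) (k : Fin 2 → ℤ) :
    fCoeff (xray v f) k = if ∑ i, k i * v i = 0 then fCoeff f k else 0 := by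
  calc fCoeff (xray v f) k
      = ∫ t in Set.Ioc 0 1, ∫ x, char (-k) x * f (x + tmap fun i => t * (v i : ℝ)) := by
        simp_rw [fCoeff, xray_eq_setIntegral]
        exact integral_mul_integral_comp_add_swap (continuous_tmap_mul v).measurable hf
          (continuous_char _).aestronglyMeasurable (fun x => (norm_char _ x).le)
    _ = ∫ t in (0:ℝ)..1,
          Complex.exp (2 * π * Complex.I * (∑ i, k i * v i : ℤ) * t) * fCoeff f k := by
        rw [intervalIntegral.integral_of_le zero_le_one]
        refine setIntegral_congr_fun measurableSet_Ioc fun t _ => ?_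
        rw [← fCoeff, fCoeff_comp_add_right, char_tmap_mul]
    _ = if ∑ i, k i * v i = 0 then fCoeff f k else 0 := by
        rw [intervalIntegral.integral_mul_const, integral_exp_two_pi_I_int_mul]
        split_ifs <;> simp

end XRay

theorem xray_integrable_and_fourierCoeff_general
    (f : Torus 2 → ℂ) (hf : Integrable f (volume : Measure (Torus 2)))
    (v : Fin 2 → ℤ) (k : Fin 2 → ℤ) :
    Integrable (xray v f) (volume : Measure (Torus 2)) ∧
    ((∑ i, k i * v i) = 0 → fCoeff (xray v f) k = fCoeff f k) ∧
    ((∑ i, k i * v i) ≠ 0 → fCoeff (xray v f) k = 0) :=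
  ⟨integrable_xray v hf, fun h => by rw [fCoeff_xray v hf, if_pos h],
    fun h => by rw [fCoeff_xray v hf, if_neg h]⟩

theorem xray_integrable_and_fourierCoeff
    (f : Torus 2 → ℂ) (hf : Integrable f (volume : Measure (Torus 2)))
    (v : Fin 2 → ℤ) (hv : v ≠ 0) (k : Fin 2 → ℤ) :
    Integrable (xray v f) (volume : Measure (Torus 2)) ∧
    ((∑ i, k i * v i) = 0 → fCoeff (xray v f) k = fCoeff f k) ∧
    ((∑ i, k i * v i) ≠ 0 → fCoeff (xray v f) k = 0) :=
  xray_integrable_and_fourierCoeff_general f hf v k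
end
end

section
/- Let r ∈ ℝ, s ≥ r, and α > 0, and suppose g ∈ H^r(𝕋² × Q). Then the function f₀ = P^{s−r}_α I* g, i.e. the sequence with f₀(k) = (1 + α⟨k⟩^{2(s−r)})^{−1} (I* g)(k), belongs to H^{2s−r}(𝕋²) ⊂ H^s(𝕋²), and f₀ is the unique minimizer over f ∈ H^r(𝕋²) of the Tikhonov functional ‖I f − g‖²_{H^r(𝕋²×Q)} + α ‖f‖²_{H^s(𝕋²)} (the functional being interpreted as +∞ when f ∉ H^s(𝕋²)). -/
noncomputable section
open scoped ENNReal NNReal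

/-- `⟨k⟩² = 1 + |k|²` for `k ∈ ℤ²`. -/
def nrmSq (k : Fin 2 → ℤ) : ℝ := 1 + ((k 0 : ℝ)^2 + (k 1 : ℝ)^2)

/-- The dot product on `ℤ²`. -/
def dotZ (k v : Fin 2 → ℤ) : ℤ := ∑ i, k i * v i

/-- The X-ray transform acting on Fourier coefficient sequences:
`(I a)(k,v) = a k` if `k ⊥ v` and `0` otherwise. -/
def IaQ (Q : Set (Fin 2 → ℤ)) (a : (Fin 2 → ℤ) → ℂ) (k : Fin 2 → ℤ) (v : Q) : ℂ :=
  if dotZ k v.1 = 0 then a k else 0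

/-- The adjoint `I*` of the X-ray transform, on Fourier coefficient sequences:
`(I* g)(k) = g(k, v_k)` (for `k = 0`, `g(0, ·)` is constant so the choice `vk 0` is immaterial). -/
def Istar (Q : Set (Fin 2 → ℤ)) (vk : (Fin 2 → ℤ) → Q)
    (g : (Fin 2 → ℤ) → Q → ℂ) (k : Fin 2 → ℤ) : ℂ :=
  g k (vk k)

/-- The squared `H^s(𝕋²)` norm of a Fourier coefficient sequence
(`ℝ≥0∞`-valued, `∞` when the sequence is not in `H^s`):
`‖a‖² = Σ_k ⟨k⟩^{2s} |a k|²`. -/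
def hsNormSq (s : ℝ) (a : (Fin 2 → ℤ) → ℂ) : ℝ≥0∞ :=
  ∑' k : Fin 2 → ℤ, ENNReal.ofReal (nrmSq k ^ s * ‖a k‖ ^ 2)

/-- The squared `H^s(𝕋² × Q)` norm:
`‖g‖² = |g(0,0)|² + Σ_{k ≠ 0} Σ_{v ∈ Q} ⟨k⟩^{2s} |g(k,v)|²`. -/
def hsQNormSq (s : ℝ) (Q : Set (Fin 2 → ℤ)) (vk : (Fin 2 → ℤ) → Q)
    (g : (Fin 2 → ℤ) → Q → ℂ) : ℝ≥0∞ :=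
  ENNReal.ofReal (‖g 0 (vk 0)‖ ^ 2) +
    ∑' (k : {k : Fin 2 → ℤ // k ≠ 0}) (v : Q),
      ENNReal.ofReal (nrmSq k.1 ^ s * ‖g k.1 v‖ ^ 2)

/-- The inner product generating the `H^s(𝕋²)` norm. -/
def hsInner (s : ℝ) (a b : (Fin 2 → ℤ) → ℂ) : ℂ :=
  ∑' k : Fin 2 → ℤ, (Complex.ofReal (nrmSq k ^ s)) * (a k * (starRingEnd ℂ) (b k))

/-- The inner product generating the `H^s(𝕋² × Q)` norm. -/
def hsQInner (s : ℝ) (Q : Set (Fin 2 → ℤ)) (vk : (Fin 2 → ℤ) → Q)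
    (g h : (Fin 2 → ℤ) → Q → ℂ) : ℂ :=
  g 0 (vk 0) * (starRingEnd ℂ) (h 0 (vk 0)) +
    ∑' (k : {k : Fin 2 → ℤ // k ≠ 0}) (v : Q),
      (Complex.ofReal (nrmSq k.1 ^ s)) * (g k.1 v * (starRingEnd ℂ) (h k.1 v))

/-- The Fourier multiplier `P^β_α`, `(P^β_α a)(k) = (1 + α ⟨k⟩^{2β})⁻¹ a(k)`. -/
def Pmul (β : ℝ) (α : ℝ) (a : (Fin 2 → ℤ) → ℂ) (k : Fin 2 → ℤ) : ℂ :=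
  (Complex.ofReal (1 + α * nrmSq k ^ β))⁻¹ * a k

/-! Both terms of the functional are diagonal in the Fourier variable. Since each `k ≠ 0` is
orthogonal to exactly one `v ∈ Q`, namely `v_k`, the misfit `‖I f - g‖²_{H^r}` splits as
`‖f - I* g‖²_{H^r}` plus the `f`-independent contribution of the components `g(k, v)`, `v ≠ v_k`.
At frequency `k` it remains to minimise `c |z - b|² + d |z|²` with `c = ⟨k⟩^{2r}`,
`d = α ⟨k⟩^{2s}`: completing the square gives the minimiser `c / (c + d) • b`, which is
`(1 + α ⟨k⟩^{2(s-r)})⁻¹ b`, and the excess `(c + d) |z - c / (c + d) • b|²`, positive unless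
`f = f₀`. The regularity of `f₀` follows from `x / (1 + α x) ≤ α⁻¹`. -/

lemma ENNReal.tsum_eq_add_tsum_ne {ι : Type*} (F : ι → ℝ≥0∞) (a : ι) :
    ∑' x, F x = F a + ∑' x : {x // x ≠ a}, F x := by
  rw [← ENNReal.summable.tsum_add_tsum_compl (s := {a}) ENNReal.summable, tsum_singleton]
  rfl

lemma norm_sub_sq_add_norm_sq_eq {E : Type*} [NormedAddCommGroup E] [InnerProductSpace ℝ E]
    {c d : ℝ} (hcd : c + d ≠ 0) (b z : E) :
    c * ‖z - b‖ ^ 2 + d * ‖z‖ ^ 2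
      = (c * ‖(c / (c + d)) • b - b‖ ^ 2 + d * ‖(c / (c + d)) • b‖ ^ 2)
        + (c + d) * ‖z - (c / (c + d)) • b‖ ^ 2 := by
  simp only [@norm_sub_sq_real, norm_smul, mul_pow, Real.norm_eq_abs, sq_abs,
    real_inner_smul_left, real_inner_smul_right, real_inner_self_eq_norm_sq]
  field_simp
  ring

lemma nrmSq_pos (k : Fin 2 → ℤ) : 0 < nrmSq k := by
  unfold nrmSq
  positivity

lemma rpow_nrmSq_pos (k : Fin 2 → ℤ) (x : ℝ) : 0 < nrmSq k ^ x :=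
  Real.rpow_pos_of_pos (nrmSq_pos k) x

@[simp] lemma nrmSq_zero : nrmSq 0 = 1 := by
  simp [nrmSq]

lemma hsNormSq_pos (s : ℝ) {a : (Fin 2 → ℤ) → ℂ} (ha : a ≠ 0) : 0 < hsNormSq s a := by
  obtain ⟨k, hk⟩ := Function.ne_iff.mp ha
  refine lt_of_lt_of_le ?_ (ENNReal.le_tsum k)
  exact ENNReal.ofReal_pos.mpr
    (mul_pos (rpow_nrmSq_pos k s) (pow_pos (norm_pos_iff.mpr hk) 2))

lemma hsNormSq_le_ofReal_mul {s t C : ℝ} (hC : 0 ≤ C) {a b : (Fin 2 → ℤ) → ℂ}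
    (h : ∀ k, nrmSq k ^ s * ‖a k‖ ^ 2 ≤ C * (nrmSq k ^ t * ‖b k‖ ^ 2)) :
    hsNormSq s a ≤ ENNReal.ofReal C * hsNormSq t b := by
  rw [hsNormSq, hsNormSq, ← ENNReal.tsum_mul_left]
  exact ENNReal.tsum_le_tsum fun k =>
    (ENNReal.ofReal_le_ofReal (h k)).trans_eq (ENNReal.ofReal_mul hC)

lemma Pmul_apply_eq_smul (r s α : ℝ) (a : (Fin 2 → ℤ) → ℂ) (k : Fin 2 → ℤ) :
    Pmul (s - r) α a k
      = (nrmSq k ^ r / (nrmSq k ^ r + α * nrmSq k ^ s)) • a k := by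
  have hr : nrmSq k ^ r ≠ 0 := (rpow_nrmSq_pos k r).ne'
  have hs : nrmSq k ^ s = nrmSq k ^ r * nrmSq k ^ (s - r) := by
    rw [← Real.rpow_add (nrmSq_pos k), add_sub_cancel]
  rw [Pmul, Complex.real_smul, hs, ← Complex.ofReal_inv,
    show nrmSq k ^ r + α * (nrmSq k ^ r * nrmSq k ^ (s - r))
      = nrmSq k ^ r * (1 + α * nrmSq k ^ (s - r)) by ring, div_mul_cancel_left₀ hr]

lemma norm_Pmul_apply {β α : ℝ} (hα : 0 ≤ α) (a : (Fin 2 → ℤ) → ℂ) (k : Fin 2 → ℤ) :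
    ‖Pmul β α a k‖ = (1 + α * nrmSq k ^ β)⁻¹ * ‖a k‖ := by
  have : 0 < 1 + α * nrmSq k ^ β :=
    add_pos_of_pos_of_nonneg one_pos (mul_nonneg hα (rpow_nrmSq_pos k β).le)
  rw [Pmul, norm_mul, norm_inv, Complex.norm_real, Real.norm_eq_abs, abs_of_pos this]

lemma mul_inv_one_add_mul_le {α x : ℝ} (hα : 0 < α) (hx : 0 ≤ x) : x * (1 + α * x)⁻¹ ≤ α⁻¹ := by
  rw [← div_eq_mul_inv, div_le_iff₀ (add_pos_of_pos_of_nonneg one_pos (mul_nonneg hα.le hx)),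
    mul_add, inv_mul_cancel_left₀ hα.ne']
  linarith [inv_pos.mpr hα]

lemma hsNormSq_Pmul_le {α : ℝ} (hα : 0 < α) (r s : ℝ) (b : (Fin 2 → ℤ) → ℂ) :
    hsNormSq (2 * s - r) (Pmul (s - r) α b) ≤ ENNReal.ofReal (α⁻¹ ^ 2) * hsNormSq r b := by
  refine hsNormSq_le_ofReal_mul (sq_nonneg _) fun k => ?_
  set t := nrmSq k ^ (s - r)
  have ht : 0 ≤ t := (rpow_nrmSq_pos k _).le
  have hsplit : nrmSq k ^ (2 * s - r) = t ^ 2 * nrmSq k ^ r := by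
    rw [sq, ← Real.rpow_add (nrmSq_pos k), ← Real.rpow_add (nrmSq_pos k)]
    ring_nf
  calc nrmSq k ^ (2 * s - r) * ‖Pmul (s - r) α b k‖ ^ 2
      = (t * (1 + α * t)⁻¹) ^ 2 * (nrmSq k ^ r * ‖b k‖ ^ 2) := by
        rw [norm_Pmul_apply hα.le, hsplit]; ring
    _ ≤ α⁻¹ ^ 2 * (nrmSq k ^ r * ‖b k‖ ^ 2) := by
        have hr := rpow_nrmSq_pos k r
        gcongr
        exact mul_inv_one_add_mul_le hα ht

def tikhonovFunctional (r s α : ℝ) (b f : (Fin 2 → ℤ) → ℂ) : ℝ≥0∞ :=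
  hsNormSq r (f - b) + ENNReal.ofReal α * hsNormSq s f

lemma hsNormSq_add_ofReal_mul_hsNormSq {α : ℝ} (hα : 0 ≤ α) (r s : ℝ)
    (a c : (Fin 2 → ℤ) → ℂ) :
    hsNormSq r a + ENNReal.ofReal α * hsNormSq s c
      = ∑' k, ENNReal.ofReal (nrmSq k ^ r * ‖a k‖ ^ 2 + α * nrmSq k ^ s * ‖c k‖ ^ 2) := by
  rw [hsNormSq, hsNormSq, ← ENNReal.tsum_mul_left, ← ENNReal.tsum_add]
  refine tsum_congr fun k => ?_
  have hr := rpow_nrmSq_pos k r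
  have hs := rpow_nrmSq_pos k s
  rw [← ENNReal.ofReal_mul hα, mul_assoc,
    ← ENNReal.ofReal_add (by positivity) (by positivity)]

lemma tikhonovFunctional_eq_add {α : ℝ} (hα : 0 ≤ α) (r s : ℝ) (b f : (Fin 2 → ℤ) → ℂ) :
    tikhonovFunctional r s α b f
      = tikhonovFunctional r s α b (Pmul (s - r) α b)
        + (hsNormSq r (f - Pmul (s - r) α b)
          + ENNReal.ofReal α * hsNormSq s (f - Pmul (s - r) α b)) := by
  simp only [tikhonovFunctional, hsNormSq_add_ofReal_mul_hsNormSq hα]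
  rw [← ENNReal.tsum_add]
  refine tsum_congr fun k => ?_
  have hr := rpow_nrmSq_pos k r
  have hs := rpow_nrmSq_pos k s
  rw [← ENNReal.ofReal_add (by positivity) (by positivity)]
  congr 1
  have hcd : nrmSq k ^ r + α * nrmSq k ^ s ≠ 0 := by positivity
  simp only [Pi.sub_apply, Pmul_apply_eq_smul]
  linear_combination norm_sub_sq_add_norm_sq_eq hcd (b k) (f k)

lemma tikhonovFunctional_Pmul_le {α : ℝ} (hα : 0 ≤ α) (r s : ℝ) (b : (Fin 2 → ℤ) → ℂ) :
    tikhonovFunctional r s α b (Pmul (s - r) α b) ≤ hsNormSq r b := by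
  calc tikhonovFunctional r s α b (Pmul (s - r) α b)
      ≤ tikhonovFunctional r s α b 0 := by
        rw [tikhonovFunctional_eq_add hα r s b 0]; exact le_self_add
    _ = hsNormSq r b := by simp [tikhonovFunctional, hsNormSq]

def offDiagNormSq (s : ℝ) (Q : Set (Fin 2 → ℤ)) (vk : (Fin 2 → ℤ) → Q)
    (G : (Fin 2 → ℤ) → Q → ℂ) : ℝ≥0∞ :=
  ∑' (k : {k : Fin 2 → ℤ // k ≠ 0}) (v : {v : Q // v ≠ vk k.1}),
    ENNReal.ofReal (nrmSq k.1 ^ s * ‖G k.1 v‖ ^ 2)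

lemma hsQNormSq_eq_hsNormSq_Istar_add (s : ℝ) (Q : Set (Fin 2 → ℤ)) (vk : (Fin 2 → ℤ) → Q)
    (G : (Fin 2 → ℤ) → Q → ℂ) :
    hsQNormSq s Q vk G = hsNormSq s (Istar Q vk G) + offDiagNormSq s Q vk G := by
  rw [hsQNormSq, hsNormSq, offDiagNormSq,
    ENNReal.tsum_eq_add_tsum_ne (fun k => ENNReal.ofReal (nrmSq k ^ s * ‖Istar Q vk G k‖ ^ 2)) 0,
    add_assoc, ← ENNReal.tsum_add]
  congr 1
  · simp [Istar]
  · exact tsum_congr fun k => ENNReal.tsum_eq_add_tsum_ne _ (vk k.1)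

lemma Istar_IaQ_sub {Q : Set (Fin 2 → ℤ)} {vk : (Fin 2 → ℤ) → Q}
    (hvk : ∀ k, k ≠ 0 → dotZ k (vk k).1 = 0) (f : (Fin 2 → ℤ) → ℂ) (g : (Fin 2 → ℤ) → Q → ℂ) :
    Istar Q vk (fun k v => IaQ Q f k v - g k v) = f - Istar Q vk g := by
  funext k
  have hk : dotZ k (vk k).1 = 0 := by
    rcases eq_or_ne k 0 with rfl | hk
    · simp [dotZ]
    · exact hvk k hk
  simp [Istar, IaQ, hk]

lemma offDiagNormSq_IaQ_sub {Q : Set (Fin 2 → ℤ)} {vk : (Fin 2 → ℤ) → Q}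
    (hvk : ∀ k, k ≠ 0 → ∀ v : Q, dotZ k v.1 = 0 → v = vk k) (s : ℝ) (f : (Fin 2 → ℤ) → ℂ)
    (g : (Fin 2 → ℤ) → Q → ℂ) :
    offDiagNormSq s Q vk (fun k v => IaQ Q f k v - g k v) = offDiagNormSq s Q vk g := by
  refine tsum_congr fun k => tsum_congr fun v => ?_
  have : dotZ k.1 v.1.1 ≠ 0 := fun h => v.2 (hvk k.1 k.2 v.1 h)
  simp [IaQ, this]

theorem tikhonov_minimizer_general
    (r s α : ℝ) (hα : 0 < α)
    (Q : Set (Fin 2 → ℤ))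
    (vk : (Fin 2 → ℤ) → Q)
    (hvk : ∀ k : Fin 2 → ℤ, k ≠ 0 →
      dotZ k (vk k).1 = 0 ∧ ∀ v : Q, dotZ k v.1 = 0 → v = vk k)
    (g : (Fin 2 → ℤ) → Q → ℂ)
    (hg : hsQNormSq r Q vk g < ⊤) :
    hsNormSq (2*s - r) (Pmul (s - r) α (Istar Q vk g)) < ⊤ ∧
    hsNormSq s (Pmul (s - r) α (Istar Q vk g)) < ⊤ ∧
    ∀ f : (Fin 2 → ℤ) → ℂ, f ≠ Pmul (s - r) α (Istar Q vk g) →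
      hsQNormSq r Q vk (fun k v => IaQ Q (Pmul (s - r) α (Istar Q vk g)) k v - g k v) +
          ENNReal.ofReal α * hsNormSq s (Pmul (s - r) α (Istar Q vk g))
        < hsQNormSq r Q vk (fun k v => IaQ Q f k v - g k v) +
            ENNReal.ofReal α * hsNormSq s f := by
  set b := Istar Q vk g
  set f₀ := Pmul (s - r) α b
  rw [hsQNormSq_eq_hsNormSq_Istar_add] at hg
  have hb : hsNormSq r b < ⊤ := le_self_add.trans_lt hg
  have hR : offDiagNormSq r Q vk g ≠ ⊤ := (le_add_self.trans_lt hg).ne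
  have hJ : ∀ f, hsQNormSq r Q vk (fun k v => IaQ Q f k v - g k v)
      + ENNReal.ofReal α * hsNormSq s f
        = offDiagNormSq r Q vk g + tikhonovFunctional r s α b f := by
    intro f
    rw [hsQNormSq_eq_hsNormSq_Istar_add, Istar_IaQ_sub (fun k hk => (hvk k hk).1),
      offDiagNormSq_IaQ_sub (fun k hk => (hvk k hk).2), tikhonovFunctional]
    ring
  have hT₀ : tikhonovFunctional r s α b f₀ < ⊤ :=
    (tikhonovFunctional_Pmul_le hα.le r s b).trans_lt hb
  refine ⟨(hsNormSq_Pmul_le hα r s b).trans_lt (ENNReal.mul_lt_top ENNReal.ofReal_lt_top hb),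
    ENNReal.lt_top_of_mul_ne_top_right (le_add_self.trans_lt hT₀).ne
      (ENNReal.ofReal_pos.mpr hα).ne', fun f hf => ?_⟩
  rw [hJ, hJ, tikhonovFunctional_eq_add hα.le r s b f]
  exact ENNReal.add_lt_add_left hR (ENNReal.lt_add_right hT₀.ne
    ((hsNormSq_pos r (sub_ne_zero.mpr hf)).trans_le le_self_add).ne')

theorem tikhonov_minimizer
    (r s α : ℝ) (hs : r ≤ s) (hα : 0 < α)
    (Q : Set (Fin 2 → ℤ))
    (hQ0 : ∀ v ∈ Q, v ≠ 0)
    (hQ : ∀ v : Fin 2 → ℤ, v ≠ 0 → ∃! q, q ∈ Q ∧ ∃ m : ℤ, v = m • q)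
    (vk : (Fin 2 → ℤ) → Q)
    (hvk : ∀ k : Fin 2 → ℤ, k ≠ 0 →
      dotZ k (vk k).1 = 0 ∧ ∀ v : Q, dotZ k v.1 = 0 → v = vk k)
    (g : (Fin 2 → ℤ) → Q → ℂ)
    (hg0 : ∀ v w : Q, g 0 v = g 0 w)
    (hg : hsQNormSq r Q vk g < ⊤) :
    hsNormSq (2*s - r) (Pmul (s - r) α (Istar Q vk g)) < ⊤ ∧
    hsNormSq s (Pmul (s - r) α (Istar Q vk g)) < ⊤ ∧
    ∀ f : (Fin 2 → ℤ) → ℂ, f ≠ Pmul (s - r) α (Istar Q vk g) →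
      hsQNormSq r Q vk (fun k v => IaQ Q (Pmul (s - r) α (Istar Q vk g)) k v - g k v) +
          ENNReal.ofReal α * hsNormSq s (Pmul (s - r) α (Istar Q vk g))
        < hsQNormSq r Q vk (fun k v => IaQ Q f k v - g k v) +
            ENNReal.ofReal α * hsNormSq s f :=
  tikhonov_minimizer_general r s α hα Q vk hvk g hg
end
end

section
/- Let f ∈ L¹(𝕋ⁿ), and let v₁, …, v_d ∈ ℤⁿ and u₁, …, u_d ∈ ℤⁿ be two linearly independent families that span the same d-dimensional ℚ-linear subspace of ℚⁿ. Then the d-plane Radon transforms computed with the two families agree: R f computed with v₁, …, v_d equals R f computed with u₁, …, u_d almost everywhere on 𝕋ⁿ. -/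
noncomputable section
open MeasureTheory Real
open scoped ENNReal NNReal

/-- The `d`-plane Radon transform on `𝕋ⁿ` associated to integer vectors `v₁, …, v_d`:
`R f(x) = ∫_{[0,1]^d} f(x + t₁v₁ + ⋯ + t_d v_d) dt`. -/
def radon {n d : ℕ} (v : Fin d → Fin n → ℤ) (f : Torus n → ℂ) (x : Torus n) : ℂ :=
  ∫ t in Set.Icc (0 : Fin d → ℝ) 1, f (x + tmap fun i => ∑ j, t j * (v j i : ℝ))
/-!
For a strongly measurable `f`, `radon v f x = ∫ f (x + a) ∂μ_v`, where `μ_v` is the image of the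
Haar measure of `𝕋ᵈ` under the homomorphism `y ↦ ∑ⱼ yⱼ vⱼ`; so it suffices to see that `μ_v`
depends only on the ℚ-span of the `vⱼ`. If every `uⱼ` lies in that span, then `qⱼ uⱼ = ∑ₖ pⱼₖ vₖ`
with integers `qⱼ ≠ 0`. As `y ↦ q y` preserves the Haar measure of the circle, `μ_u` is the image
of a probability measure on `𝕋ᵈ` under `y ↦ ∑ⱼ yⱼ vⱼ`, and translation invariance of Haar measure
gives `μ_u ∗ μ_v = μ_v`. By symmetry and commutativity of convolution,
`μ_v = μ_u ∗ μ_v = μ_v ∗ μ_u = μ_u`. Finally, a general `f` agrees a.e. with a strongly measurable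
one, and modifying `f` on a null set modifies `radon v f` only on a null set.
-/

instance : IsProbabilityMeasure (volume : Measure (AddCircle (1:ℝ))) := ⟨by simp⟩

namespace MeasureTheory.Measure

theorem ae_ae_add_of_ae {G : Type*} [AddGroup G] [MeasurableSpace G] [MeasurableAdd₂ G]
    {μ ν : Measure G} [SFinite μ] [SFinite ν] [μ.IsAddRightInvariant] {p : G → Prop}
    (h : ∀ᵐ x ∂μ, p x) : ∀ᵐ x ∂μ, ∀ᵐ a ∂ν, p (x + a) :=
  ae_ae_of_ae_prod <|
    (quasiMeasurePreserving_fst.comp (measurePreserving_add_prod μ ν).quasiMeasurePreserving).ae h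

theorem conv_eq_of_isAddLeftInvariant {G : Type*} [AddGroup G] [MeasurableSpace G]
    [MeasurableAdd₂ G] (ν μ : Measure G) [IsProbabilityMeasure ν] [SFinite μ]
    [μ.IsAddLeftInvariant] : ν ∗ μ = μ := by
  refine ext_of_lintegral _ fun f hf => ?_
  simp only [lintegral_conv hf, lintegral_add_left_eq_self, lintegral_const, measure_univ, mul_one]

end MeasureTheory.Measure

theorem exists_zsmul_eq_sum_zsmul_of_mem_span {n d : ℕ} {w : Fin n → ℤ} {v : Fin d → Fin n → ℤ}
    (h : (fun i => (w i : ℚ)) ∈ Submodule.span ℚ (Set.range fun j i => (v j i : ℚ))) :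
    ∃ q : ℤ, q ≠ 0 ∧ ∃ p : Fin d → ℤ, q • w = ∑ k, p k • v k := by
  obtain ⟨c, hc⟩ := (Submodule.mem_span_range_iff_exists_fun ℚ).mp h
  obtain ⟨⟨q, hq⟩, hcq⟩ :=
    IsLocalization.exist_integer_multiples_of_finite (nonZeroDivisors ℤ) c
  choose p hp using hcq
  refine ⟨q, nonZeroDivisors.ne_zero hq, p, funext fun i => Int.cast_injective (α := ℚ) ?_⟩
  have hci := congrFun hc i
  simp only [Finset.sum_apply, Pi.smul_apply, smul_eq_mul] at hci hp ⊢
  push_cast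
  simp only [eq_intCast] at hp
  simp only [hp, ← hci, Finset.mul_sum, zsmul_eq_mul, mul_assoc]

namespace Torus

variable {m n d : ℕ}

def homOfMatrix (v : Matrix (Fin d) (Fin n) ℤ) : Torus d →+ Torus n where
  toFun y i := ∑ j, v j i • y j
  map_zero' := by funext i; simp
  map_add' y z := by funext i; simp [smul_add, Finset.sum_add_distrib]

theorem continuous_homOfMatrix (v : Matrix (Fin d) (Fin n) ℤ) : Continuous (homOfMatrix v) := by
  change Continuous fun (y : Torus d) (i : Fin n) => ∑ j, v j i • y j
  fun_prop

theorem measurable_homOfMatrix (v : Matrix (Fin d) (Fin n) ℤ) : Measurable (homOfMatrix v) :=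
  (continuous_homOfMatrix v).measurable

theorem homOfMatrix_mul (p : Matrix (Fin m) (Fin d) ℤ) (v : Matrix (Fin d) (Fin n) ℤ) :
    homOfMatrix (p * v) = (homOfMatrix v).comp (homOfMatrix p) := by
  ext y i
  simp only [homOfMatrix, AddMonoidHom.coe_mk, ZeroHom.coe_mk, AddMonoidHom.comp_apply,
    Matrix.mul_apply, Finset.sum_smul, Finset.smul_sum, smul_smul]
  exact Finset.sum_comm.trans (Finset.sum_congr rfl fun _ _ => Finset.sum_congr rfl
    fun _ _ => by rw [mul_comm])

theorem coe_homOfMatrix_diagonal (q : Fin d → ℤ) :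
    ⇑(homOfMatrix (Matrix.diagonal q)) = fun y j => q j • y j := by
  ext y j
  simp [homOfMatrix, Matrix.diagonal_apply, ite_smul]

theorem measurePreserving_homOfMatrix_diagonal {q : Fin d → ℤ} (hq : ∀ j, q j ≠ 0) :
    MeasurePreserving (homOfMatrix (Matrix.diagonal q)) :=
  coe_homOfMatrix_diagonal q ▸
    volume_preserving_pi fun j => Measure.measurePreserving_zsmul volume (hq j)

def subtorusMeasure (v : Matrix (Fin d) (Fin n) ℤ) : Measure (Torus n) :=
  (volume : Measure (Torus d)).map (homOfMatrix v)

instance (v : Matrix (Fin d) (Fin n) ℤ) : IsProbabilityMeasure (subtorusMeasure v) :=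
  Measure.isProbabilityMeasure_map (measurable_homOfMatrix v).aemeasurable

theorem subtorusMeasure_mul (p : Matrix (Fin m) (Fin d) ℤ) (v : Matrix (Fin d) (Fin n) ℤ) :
    subtorusMeasure (p * v) = (subtorusMeasure p).map (homOfMatrix v) := by
  rw [subtorusMeasure, subtorusMeasure,
    Measure.map_map (measurable_homOfMatrix v) (measurable_homOfMatrix p), homOfMatrix_mul,
    AddMonoidHom.coe_comp]

theorem subtorusMeasure_diagonal_mul {q : Fin d → ℤ} (hq : ∀ j, q j ≠ 0)
    (v : Matrix (Fin d) (Fin n) ℤ) :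
    subtorusMeasure (Matrix.diagonal q * v) = subtorusMeasure v := by
  rw [subtorusMeasure_mul, subtorusMeasure, (measurePreserving_homOfMatrix_diagonal hq).map_eq,
    subtorusMeasure]

theorem exists_diagonal_mul_eq_mul_of_mem_span {v w : Matrix (Fin d) (Fin n) ℤ}
    (h : ∀ j, (fun i => (w j i : ℚ)) ∈ Submodule.span ℚ (Set.range fun k i => (v k i : ℚ))) :
    ∃ q : Fin d → ℤ, (∀ j, q j ≠ 0) ∧ ∃ p : Matrix (Fin d) (Fin d) ℤ,
      Matrix.diagonal q * w = p * v := by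
  choose q hq p hp using fun j => exists_zsmul_eq_sum_zsmul_of_mem_span (h j)
  refine ⟨q, hq, Matrix.of p, Matrix.ext fun j i => ?_⟩
  rw [Matrix.diagonal_mul, Matrix.mul_apply]
  simpa [Finset.sum_apply] using congrFun (hp j) i

theorem subtorusMeasure_conv_of_mem_span {v w : Matrix (Fin d) (Fin n) ℤ}
    (h : ∀ j, (fun i => (w j i : ℚ)) ∈ Submodule.span ℚ (Set.range fun k i => (v k i : ℚ))) :
    subtorusMeasure w ∗ subtorusMeasure v = subtorusMeasure v := by
  obtain ⟨q, hq, p, hqp⟩ := exists_diagonal_mul_eq_mul_of_mem_span h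
  calc subtorusMeasure w ∗ subtorusMeasure v
      = (subtorusMeasure p).map (homOfMatrix v) ∗ volume.map (homOfMatrix v) := by
        rw [← subtorusMeasure_mul, ← hqp, subtorusMeasure_diagonal_mul hq]
        rfl
    _ = (subtorusMeasure p ∗ volume).map (homOfMatrix v) :=
        (Measure.map_conv_addMonoidHom _ (measurable_homOfMatrix v)).symm
    _ = subtorusMeasure v := by rw [Measure.conv_eq_of_isAddLeftInvariant, subtorusMeasure]

theorem subtorusMeasure_eq_of_span_eq {v u : Matrix (Fin d) (Fin n) ℤ}
    (h : Submodule.span ℚ (Set.range fun j i => (v j i : ℚ))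
      = Submodule.span ℚ (Set.range fun j i => (u j i : ℚ))) :
    subtorusMeasure v = subtorusMeasure u := by
  have mem_span {a b : Matrix (Fin d) (Fin n) ℤ}
      (hab : Submodule.span ℚ (Set.range fun j i => (a j i : ℚ))
        = Submodule.span ℚ (Set.range fun j i => (b j i : ℚ))) (j : Fin d) :
      (fun i => (a j i : ℚ)) ∈ Submodule.span ℚ (Set.range fun k i => (b k i : ℚ)) :=
    hab ▸ Submodule.subset_span ⟨j, rfl⟩
  calc subtorusMeasure v = subtorusMeasure u ∗ subtorusMeasure v :=
        (subtorusMeasure_conv_of_mem_span (mem_span h.symm)).symm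
    _ = subtorusMeasure v ∗ subtorusMeasure u := Measure.conv_comm _ _
    _ = subtorusMeasure u := subtorusMeasure_conv_of_mem_span (mem_span h)

theorem continuous_tmap : Continuous (tmap (n := d)) :=
  continuous_pi fun i => (AddCircle.continuous_mk' 1).comp (continuous_apply i)

theorem map_tmap_restrict_Icc :
    (volume.restrict (Set.Icc (0 : Fin d → ℝ) 1)).map tmap = (volume : Measure (Torus d)) := by
  have h : MeasurePreserving tmap (Measure.pi fun _ : Fin d => volume.restrict (Set.Ioc (0:ℝ) 1))
      volume :=
    measurePreserving_pi _ _ fun _ => by simpa using AddCircle.measurePreserving_mk (1:ℝ) 0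
  rw [← Set.pi_univ_Icc, volume_pi, Measure.restrict_pi_pi]
  simp_rw [Pi.zero_apply, Pi.one_apply, Measure.restrict_congr_set Ioc_ae_eq_Icc.symm]
  exact h.map_eq

theorem tmap_sum_mul (v : Matrix (Fin d) (Fin n) ℤ) (t : Fin d → ℝ) :
    (tmap fun i => ∑ j, t j * (v j i : ℝ)) = homOfMatrix v (tmap t) := by
  ext i
  simp only [tmap, homOfMatrix, AddMonoidHom.coe_mk, ZeroHom.coe_mk, QuotientAddGroup.mk_sum]
  refine Finset.sum_congr rfl fun j _ => ?_
  rw [mul_comm, ← zsmul_eq_mul, AddCircle.coe_zsmul]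

theorem measurable_tmap_sum_mul (v : Matrix (Fin d) (Fin n) ℤ) :
    Measurable fun t : Fin d → ℝ => tmap fun i => ∑ j, t j * (v j i : ℝ) := by
  simp_rw [tmap_sum_mul]
  exact (measurable_homOfMatrix v).comp continuous_tmap.measurable

theorem map_restrict_Icc_eq_subtorusMeasure (v : Matrix (Fin d) (Fin n) ℤ) :
    (volume.restrict (Set.Icc (0 : Fin d → ℝ) 1)).map
      (fun t => tmap fun i => ∑ j, t j * (v j i : ℝ)) = subtorusMeasure v := by
  rw [funext (tmap_sum_mul v)]
  change Measure.map (homOfMatrix v ∘ tmap) _ = _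
  rw [← Measure.map_map (measurable_homOfMatrix v) continuous_tmap.measurable,
    map_tmap_restrict_Icc]
  rfl

end Torus

theorem radon_eq_integral_subtorusMeasure {n d : ℕ} (v : Matrix (Fin d) (Fin n) ℤ)
    {f : Torus n → ℂ} (hf : StronglyMeasurable f) (x : Torus n) :
    radon v f x = ∫ a, f (x + a) ∂Torus.subtorusMeasure v :=
  calc radon v f x
      = ∫ a, f (x + a) ∂(volume.restrict (Set.Icc (0 : Fin d → ℝ) 1)).map
          (fun t => tmap fun i => ∑ j, t j * (v j i : ℝ)) :=
        (integral_map_of_stronglyMeasurable (f := fun a => f (x + a))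
          (Torus.measurable_tmap_sum_mul v) (hf.comp_measurable (measurable_const_add x))).symm
    _ = ∫ a, f (x + a) ∂Torus.subtorusMeasure v := by
        rw [Torus.map_restrict_Icc_eq_subtorusMeasure]

theorem radon_congr_ae {n d : ℕ} (v : Matrix (Fin d) (Fin n) ℤ) {f g : Torus n → ℂ}
    (h : f =ᵐ[volume] g) : radon v f =ᵐ[volume] radon v g := by
  filter_upwards [Measure.ae_ae_add_of_ae (ν := Torus.subtorusMeasure v) h] with x hx
  rw [← Torus.map_restrict_Icc_eq_subtorusMeasure] at hx
  exact integral_congr_ae (ae_of_ae_map (Torus.measurable_tmap_sum_mul v).aemeasurable hx)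

theorem radon_well_defined_on_Grassmannian_general
    (n d : ℕ)
    (f : Torus n → ℂ) (hf : Integrable f (volume : Measure (Torus n)))
    (v u : Fin d → Fin n → ℤ)
    (hspan : Submodule.span ℚ (Set.range (fun j => fun i => (v j i : ℚ)))
      = Submodule.span ℚ (Set.range (fun j => fun i => (u j i : ℚ)))) :
    radon v f =ᵐ[(volume : Measure (Torus n))] radon u f := by
  set g := hf.aestronglyMeasurable.mk f
  have hg : StronglyMeasurable g := hf.aestronglyMeasurable.stronglyMeasurable_mk
  have hfg : f =ᵐ[volume] g := hf.aestronglyMeasurable.ae_eq_mk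
  have hvu : radon v g = radon u g := by
    funext x
    rw [radon_eq_integral_subtorusMeasure v hg, radon_eq_integral_subtorusMeasure u hg,
      Torus.subtorusMeasure_eq_of_span_eq hspan]
  exact (radon_congr_ae v hfg).trans (hvu ▸ (radon_congr_ae u hfg).symm)

theorem radon_well_defined_on_Grassmannian
    (n d : ℕ) (hn : 2 ≤ n) (hd1 : 1 ≤ d) (hd2 : d ≤ n - 1)
    (f : Torus n → ℂ) (hf : Integrable f (volume : Measure (Torus n)))
    (v u : Fin d → Fin n → ℤ)
    (hv : LinearIndependent ℚ (fun j => fun i => (v j i : ℚ)))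
    (hu : LinearIndependent ℚ (fun j => fun i => (u j i : ℚ)))
    (hspan : Submodule.span ℚ (Set.range (fun j => fun i => (v j i : ℚ)))
      = Submodule.span ℚ (Set.range (fun j => fun i => (u j i : ℚ)))) :
    radon v f =ᵐ[(volume : Measure (Torus n))] radon u f :=
  radon_well_defined_on_Grassmannian_general n d f hf v u hspan
end
end

section
/- Let s ∈ ℝ and let w : ℤⁿ × Gr(d,n) → (0,∞) satisfy Σ_{A ∈ Ω_k} w(k,A)² ≤ C_w² and W_k := Σ_{A ∈ Ω_k} w(k,A)² ≥ c_w² for all k ∈ ℤⁿ, for some constants C_w, c_w > 0. For a sequence g : ℤⁿ × Gr(d,n) → ℂ with ‖g‖²_{L_s^{2,2}} := Σ_{A ∈ Gr(d,n)} Σ_{k ∈ ℤⁿ} ⟨k⟩^{2s} w(k,A)² |g(k,A)|² < ∞, define (B g)(k) = W_k^{−1} Σ_{A ∈ Ω_k} w(k,A)² g(k,A). Then B g is well defined (the series converges absolutely for each k) and Σ_{k ∈ ℤⁿ} ⟨k⟩^{2s} |(B g)(k)|² ≤ c_w^{−2} ‖g‖²_{L_s^{2,2}}; that is, the linear operator F_{W^{−1}}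 R_d^* : L_s^{2,2}(X_{d,n};w) → H^s(𝕋ⁿ) is (1/c_w)-Lipschitz. -/
noncomputable section
open scoped ENNReal NNReal

/-- The Grassmannian `Gr(d,n)`: `d`-dimensional `ℚ`-linear subspaces of `ℚⁿ`. -/
def Gr (d n : ℕ) : Type := {A : Submodule ℚ (Fin n → ℚ) // Module.finrank ℚ A = d}

/-- `A ∈ Ω_k` iff `k ⊥ A`, i.e. `k·q = 0` for all `q ∈ A`. -/
def perp {n : ℕ} (d : ℕ) (k : Fin n → ℤ) : Set (Gr d n) :=
  {A | ∀ q ∈ A.1, ∑ i, (k i : ℚ) * q i = 0}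

/-- `V` is a basis of integer vectors for `A ∈ Gr(d,n)`. -/
def IsIntBasis {n d : ℕ} (A : Gr d n) (V : Fin d → Fin n → ℤ) : Prop :=
  LinearIndependent ℚ (fun j => fun i => (V j i : ℚ)) ∧
    Submodule.span ℚ (Set.range (fun j => fun i => (V j i : ℚ))) = A.1

/-- `W_k = Σ_{A ∈ Ω_k} w(k,A)²`. -/
def Wk {n : ℕ} (d : ℕ) (w : (Fin n → ℤ) → Gr d n → ℝ) (k : Fin n → ℤ) : ℝ :=
  (∑' A : perp d k, ENNReal.ofReal (w k A.1 ^ 2)).toReal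

/-- `⟨k⟩² = 1 + |k|²` for `k ∈ ℤⁿ`. -/
def nrmSqN {n : ℕ} (k : Fin n → ℤ) : ℝ := 1 + ∑ i, (k i : ℝ)^2

/-!
For each frequency `k`, `(B g)(k)` is the average of `g(k, ·)` over `Ω_k` with weights `w(k, A)²`.
Cauchy–Schwarz gives `|Σ w² g|² ≤ W_k · Σ w² |g|²`, hence
`|(B g)(k)|² ≤ W_k⁻¹ Σ_{A ∈ Ω_k} w² |g|² ≤ c_w⁻² Σ_{A ∈ Ω_k} w² |g|²`.
Multiplying by `⟨k⟩^{2s}`, summing over `k` and enlarging each `Ω_k` to `Gr(d,n)` gives the bound.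
-/

section WeightedSums

variable {ι : Type*}

theorem summable_of_tsum_ofReal_ne_top {u : ι → ℝ} (hu : 0 ≤ u)
    (h : ∑' i, ENNReal.ofReal (u i) ≠ ∞) : Summable u :=
  (ENNReal.summable_toReal h).congr fun i => ENNReal.toReal_ofReal (hu i)

theorem tsum_mul_sq_le_tsum_sq_mul_tsum_sq {u v : ι → ℝ} (hu : 0 ≤ u) (hv : 0 ≤ v)
    (hu2 : Summable fun i => u i ^ 2) (hv2 : Summable fun i => v i ^ 2) :
    (∑' i, u i * v i) ^ 2 ≤ (∑' i, u i ^ 2) * ∑' i, v i ^ 2 := by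
  have := Real.inner_le_Lp_mul_Lq_tsum_of_nonneg .two_two hu hv
    (by simpa only [Real.rpow_two] using hu2) (by simpa only [Real.rpow_two] using hv2)
  simp only [Real.rpow_two, ← Real.sqrt_eq_rpow] at this
  calc (∑' i, u i * v i) ^ 2 ≤ (√(∑' i, u i ^ 2) * √(∑' i, v i ^ 2)) ^ 2 := by
        gcongr
        exact tsum_nonneg fun i => mul_nonneg (hu i) (hv i)
    _ = _ := by
        rw [mul_pow, Real.sq_sqrt (tsum_nonneg fun i => sq_nonneg _),
          Real.sq_sqrt (tsum_nonneg fun i => sq_nonneg _)]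

theorem summable_mul_of_summable_mul_sq {a b : ι → ℝ} (ha : 0 ≤ a) (hb : 0 ≤ b)
    (ha_sum : Summable a) (hab : Summable fun i => a i * b i ^ 2) :
    Summable fun i => a i * b i := by
  refine .of_nonneg_of_le (fun i => mul_nonneg (ha i) (hb i)) (fun i => ?_) (ha_sum.add hab)
  -- `a b ≤ a + a b²` because `b ≤ 1 + b²`
  nlinarith [mul_nonneg (ha i) (sq_nonneg (b i - 1)), mul_nonneg (ha i) (hb i)]

section NormedSpace

variable {E : Type*} [NormedAddCommGroup E] [NormedSpace ℝ E] {a : ι → ℝ} {f : ι → E}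

theorem norm_tsum_smul_sq_le (ha : 0 ≤ a) (ha_sum : Summable a)
    (haf : Summable fun i => a i * ‖f i‖ ^ 2) :
    ‖∑' i, a i • f i‖ ^ 2 ≤ (∑' i, a i) * ∑' i, a i * ‖f i‖ ^ 2 := by
  have hsqrt : ∀ i, √(a i) * (√(a i) * ‖f i‖) = a i * ‖f i‖ := fun i => by
    rw [← mul_assoc, Real.mul_self_sqrt (ha i)]
  have hnorm : ∀ i, ‖a i • f i‖ = a i * ‖f i‖ := fun i => by
    rw [norm_smul, Real.norm_of_nonneg (ha i)]
  calc ‖∑' i, a i • f i‖ ^ 2 ≤ (∑' i, √(a i) * (√(a i) * ‖f i‖)) ^ 2 := by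
        simp only [hsqrt, ← hnorm]
        gcongr
        exact norm_tsum_le_tsum_norm <| by
          simpa only [hnorm] using
            summable_mul_of_summable_mul_sq ha (fun i => norm_nonneg (f i)) ha_sum haf
    _ ≤ (∑' i, √(a i) ^ 2) * ∑' i, (√(a i) * ‖f i‖) ^ 2 :=
        tsum_mul_sq_le_tsum_sq_mul_tsum_sq (fun i => Real.sqrt_nonneg _)
          (fun i => mul_nonneg (Real.sqrt_nonneg _) (norm_nonneg _))
          (by simpa only [Real.sq_sqrt (ha _)] using ha_sum)
          (by simpa only [mul_pow, Real.sq_sqrt (ha _)] using haf)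
    _ = _ := by simp only [mul_pow, Real.sq_sqrt (ha _)]

theorem norm_inv_tsum_smul_tsum_smul_sq_le (ha : 0 ≤ a) (ha_sum : Summable a)
    (haf : Summable fun i => a i * ‖f i‖ ^ 2) :
    ‖(∑' i, a i)⁻¹ • ∑' i, a i • f i‖ ^ 2 ≤ (∑' i, a i)⁻¹ * ∑' i, a i * ‖f i‖ ^ 2 := by
  rcases (tsum_nonneg ha).eq_or_lt with hW | hW
  · rw [← hW]; simp
  set W := ∑' i, a i
  calc ‖W⁻¹ • ∑' i, a i • f i‖ ^ 2 = W⁻¹ ^ 2 * ‖∑' i, a i • f i‖ ^ 2 := by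
        rw [norm_smul, mul_pow, Real.norm_of_nonneg (inv_nonneg.mpr hW.le)]
    _ ≤ W⁻¹ ^ 2 * (W * ∑' i, a i * ‖f i‖ ^ 2) := by
        gcongr
        exact norm_tsum_smul_sq_le ha ha_sum haf
    _ = W⁻¹ * ∑' i, a i * ‖f i‖ ^ 2 := by field_simp

theorem ofReal_mul_norm_inv_tsum_smul_tsum_smul_sq_le {c : ℝ} (hc : 0 ≤ c) (ha : 0 ≤ a)
    (ha_sum : Summable a) (haf : Summable fun i => a i * ‖f i‖ ^ 2) :
    ENNReal.ofReal (c * ‖(∑' i, ENNReal.ofReal (a i)).toReal⁻¹ • ∑' i, a i • f i‖ ^ 2) ≤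
      (∑' i, ENNReal.ofReal (a i))⁻¹ * ∑' i, ENNReal.ofReal (c * a i * ‖f i‖ ^ 2) := by
  have hcaf : Summable fun i => c * a i * ‖f i‖ ^ 2 := by
    simpa only [mul_assoc] using haf.mul_left c
  rw [← ENNReal.ofReal_tsum_of_nonneg ha ha_sum, ENNReal.toReal_ofReal (tsum_nonneg ha),
    ← ENNReal.ofReal_tsum_of_nonneg
      (fun i => mul_nonneg (mul_nonneg hc (ha i)) (sq_nonneg _)) hcaf]
  calc ENNReal.ofReal (c * ‖(∑' i, a i)⁻¹ • ∑' i, a i • f i‖ ^ 2)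
      ≤ ENNReal.ofReal ((∑' i, a i)⁻¹ * ∑' i, c * a i * ‖f i‖ ^ 2) := by
        refine ENNReal.ofReal_le_ofReal ?_
        simp only [mul_assoc, tsum_mul_left, mul_left_comm _ c]
        exact mul_le_mul_of_nonneg_left (norm_inv_tsum_smul_tsum_smul_sq_le ha ha_sum haf) hc
    _ = ENNReal.ofReal (∑' i, a i)⁻¹ * ENNReal.ofReal (∑' i, c * a i * ‖f i‖ ^ 2) :=
        ENNReal.ofReal_mul (inv_nonneg.mpr (tsum_nonneg ha))
    _ ≤ _ := mul_le_mul_left ENNReal.ofReal_inv_le _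

end NormedSpace

end WeightedSums

theorem normalized_backprojection_lipschitz_general
    (n d : ℕ) (s : ℝ)
    (w : (Fin n → ℤ) → Gr d n → ℝ)
    (Cw cw : ℝ)
    (hsum : ∀ k : Fin n → ℤ,
      ∑' A : perp d k, ENNReal.ofReal (w k A.1 ^ 2) ≤ ENNReal.ofReal (Cw ^ 2))
    (hlow : ∀ k : Fin n → ℤ,
      ENNReal.ofReal (cw ^ 2) ≤ ∑' A : perp d k, ENNReal.ofReal (w k A.1 ^ 2))
    (g : (Fin n → ℤ) → Gr d n → ℂ)
    (hg : (∑' (A : Gr d n) (k : Fin n → ℤ),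
      ENNReal.ofReal (nrmSqN k ^ s * w k A ^ 2 * ‖g k A‖ ^ 2)) < ⊤) :
    (∀ k : Fin n → ℤ, Summable fun A : perp d k => w k A.1 ^ 2 * ‖g k A.1‖) ∧
    ∑' k : Fin n → ℤ,
        ENNReal.ofReal (nrmSqN k ^ s *
          ‖((Wk d w k : ℂ))⁻¹ * ∑' A : perp d k, (Complex.ofReal (w k A.1 ^ 2)) * g k A.1‖ ^ 2)
      ≤ (ENNReal.ofReal (cw ^ 2))⁻¹ *
          ∑' (A : Gr d n) (k : Fin n → ℤ),
            ENNReal.ofReal (nrmSqN k ^ s * w k A ^ 2 * ‖g k A‖ ^ 2) := by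
  have hweight : ∀ k : Fin n → ℤ, 0 < nrmSqN k ^ s := fun k =>
    Real.rpow_pos_of_pos (by unfold nrmSqN; positivity) s
  have hslice : ∀ k : Fin n → ℤ,
      ∑' A : perp d k, ENNReal.ofReal (nrmSqN k ^ s * w k A.1 ^ 2 * ‖g k A.1‖ ^ 2) ≤
        ∑' A : Gr d n, ENNReal.ofReal (nrmSqN k ^ s * w k A ^ 2 * ‖g k A‖ ^ 2) := fun k =>
    ENNReal.tsum_comp_le_tsum_of_injective Subtype.val_injective _
  have hW : ∀ k, Summable fun A : perp d k => w k A.1 ^ 2 := fun k =>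
    summable_of_tsum_ofReal_ne_top (fun _ => sq_nonneg _)
      ((hsum k).trans_lt ENNReal.ofReal_lt_top).ne
  have hG : ∀ k, Summable fun A : perp d k => w k A.1 ^ 2 * ‖g k A.1‖ ^ 2 := fun k => by
    have hfin := (hslice k).trans_lt <| (ENNReal.le_tsum k).trans_lt (ENNReal.tsum_comm ▸ hg)
    refine (summable_mul_left_iff (hweight k).ne').mp ?_
    simpa only [mul_assoc] using
      summable_of_tsum_ofReal_ne_top (fun A => by have := hweight k; positivity) hfin.ne
  refine ⟨fun k => summable_mul_of_summable_mul_sq (fun _ => sq_nonneg _) (fun _ => norm_nonneg _)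
    (hW k) (hG k), ?_⟩
  calc _ ≤ ∑' k : Fin n → ℤ, (ENNReal.ofReal (cw ^ 2))⁻¹ *
          ∑' A : Gr d n, ENNReal.ofReal (nrmSqN k ^ s * w k A ^ 2 * ‖g k A‖ ^ 2) := by
        refine ENNReal.tsum_le_tsum fun k => ?_
        simp only [Wk, ← Complex.ofReal_inv, ← Complex.real_smul]
        refine (ofReal_mul_norm_inv_tsum_smul_tsum_smul_sq_le (hweight k).le
          (fun _ => sq_nonneg _) (hW k) (hG k)).trans ?_
        exact mul_le_mul' (ENNReal.inv_le_inv.mpr (hlow k)) (hslice k)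
    _ = _ := by rw [ENNReal.tsum_mul_left, ENNReal.tsum_comm]

theorem normalized_backprojection_lipschitz
    (n d : ℕ) (hn : 2 ≤ n) (hd1 : 1 ≤ d) (hd2 : d ≤ n - 1) (s : ℝ)
    (w : (Fin n → ℤ) → Gr d n → ℝ) (hw : ∀ k A, 0 < w k A)
    (Cw cw : ℝ) (hCw : 0 < Cw) (hcw : 0 < cw)
    (hsum : ∀ k : Fin n → ℤ,
      ∑' A : perp d k, ENNReal.ofReal (w k A.1 ^ 2) ≤ ENNReal.ofReal (Cw ^ 2))
    (hlow : ∀ k : Fin n → ℤ,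
      ENNReal.ofReal (cw ^ 2) ≤ ∑' A : perp d k, ENNReal.ofReal (w k A.1 ^ 2))
    (g : (Fin n → ℤ) → Gr d n → ℂ)
    (hg : (∑' (A : Gr d n) (k : Fin n → ℤ),
      ENNReal.ofReal (nrmSqN k ^ s * w k A ^ 2 * ‖g k A‖ ^ 2)) < ⊤) :
    (∀ k : Fin n → ℤ, Summable fun A : perp d k => w k A.1 ^ 2 * ‖g k A.1‖) ∧
    ∑' k : Fin n → ℤ,
        ENNReal.ofReal (nrmSqN k ^ s *
          ‖((Wk d w k : ℂ))⁻¹ * ∑' A : perp d k, (Complex.ofReal (w k A.1 ^ 2)) * g k A.1‖ ^ 2)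
      ≤ (ENNReal.ofReal (cw ^ 2))⁻¹ *
          ∑' (A : Gr d n) (k : Fin n → ℤ),
            ENNReal.ofReal (nrmSqN k ^ s * w k A ^ 2 * ‖g k A‖ ^ 2) :=
  normalized_backprojection_lipschitz_general n d s w Cw cw hsum hlow g hg
end
end
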